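/- For every base b ≥ 2 and x ∈ [0,1), dim_FS^b(x) ≤ dim_FS(seq_b(x)), where seq_b(x) is the base-b expansion of x. -/

import Mathlib

open Filter Set
open scoped ENNReal

/-- A finite-state transducer over alphabet `A`, with states `Fin n`. -/
structure FST (A : Type) where
  n : ℕ
  tr : Fin n → A → Fin n
  out1 : Fin n → A → List A
  q0 : Fin n

/-- Extension of the transition function to strings. -/
def FST.deltaS {A : Type} (T : FST A) : Fin T.n → List A → Fin T.n
  | q, [] => q
  | q, a :: w => T.deltaS (T.tr q a) w

/-- Extension of the output function to strings. -/
def FST.nuS {A : Type} (T : FST A) : Fin T.n → List A → List A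
  | _, [] => []
  | q, a :: w => T.out1 q a ++ T.nuS (T.tr q a) w

/-- The output of `T` on input `w`. -/
def FST.out {A : Type} (T : FST A) (w : List A) : List A := T.nuS T.q0 w

/-- `T`-information content of a string: shortest input producing it (`⊤` if none). -/
noncomputable def Kfst {A : Type} (T : FST A) (w : List A) : ℕ∞ :=
  sInf {k : ℕ∞ | ∃ π : List A, T.out π = w ∧ (π.length : ℕ∞) = k}

/-- The real number in `[0,1)` with finite base-`b` expansion `w`. -/
noncomputable def realb (b : ℕ) (w : List (Fin b)) : ℝ :=
  ∑ i : Fin w.length, (w.get i : ℝ) / (b : ℝ) ^ (i.1 + 1)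

/-- The real number with base-`b` expansion `S`. -/
noncomputable def realSeq (b : ℕ) (S : ℕ → Fin b) : ℝ :=
  ∑' i : ℕ, (S i : ℝ) / (b : ℝ) ^ (i + 1)

/-- The length-`n` prefix of a sequence, as a string. -/
def pre {A : Type} (S : ℕ → A) (n : ℕ) : List A := List.ofFn (fun i : Fin n => S i.1)

/-- Base-`b` `T`-information content of `x` at precision `δ`. -/
noncomputable def Kprec (b : ℕ) (T : FST (Fin b)) (δ : ℝ) (x : ℝ) : ℕ∞ :=
  sInf {k : ℕ∞ | ∃ w : List (Fin b), |realb b w - x| < δ ∧ Kfst T w = k}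

/-- Base-`b` finite-state dimension of a point of `[0,1)`. -/
noncomputable def dimFSb (b : ℕ) (x : ℝ) : ℝ≥0∞ :=
  ⨅ T : FST (Fin b),
    Filter.liminf (fun δ : ℝ =>
      (Kprec b T δ x : ℝ≥0∞) / ENNReal.ofReal (Real.logb b (1/δ)))
      (nhdsWithin 0 (Set.Ioi 0))

/-- Base-`b` finite-state dimension of a subset of `[0,1)`. -/
noncomputable def dimFSbSet (b : ℕ) (A : Set ℝ) : ℝ≥0∞ :=
  ⨅ T : FST (Fin b), ⨆ x ∈ A,
    Filter.liminf (fun δ : ℝ =>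
      (Kprec b T δ x : ℝ≥0∞) / ENNReal.ofReal (Real.logb b (1/δ)))
      (nhdsWithin 0 (Set.Ioi 0))

/-- Finite-state dimension of a sequence (Doty–Moser characterization). -/
noncomputable def dimFSseq {A : Type} (S : ℕ → A) : ℝ≥0∞ :=
  ⨅ T : FST A,
    Filter.liminf (fun n : ℕ => (Kfst T (pre S n) : ℝ≥0∞) / (n : ℝ≥0∞)) Filter.atTop

/-- Finite-state dimension of a set of sequences. -/
noncomputable def dimFSseqSet {A : Type} (X : Set (ℕ → A)) : ℝ≥0∞ :=
  ⨅ T : FST A, ⨆ S ∈ X,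
    Filter.liminf (fun n : ℕ => (Kfst T (pre S n) : ℝ≥0∞) / (n : ℝ≥0∞)) Filter.atTop

/-- digit complement of a sequence -/
def compSeq (b : ℕ) (S : ℕ → Fin b) : ℕ → Fin b :=
  fun i => ⟨b - 1 - (S i : ℕ), by have := (S i).isLt; omega⟩

/-- `S` ends with infinitely many digits `b-1`. -/
def endsBm1 (b : ℕ) (S : ℕ → Fin b) : Prop := ∃ N, ∀ i ≥ N, (S i : ℕ) = b - 1

/-- A separator enumerator: a map into `[0,1)` with dense image in `[0,1]`. -/
def isSE {A : Type} (f : List A → ℝ) : Prop :=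
  (∀ w, f w ∈ Set.Ico (0:ℝ) 1) ∧ ∀ y ∈ Set.Icc (0:ℝ) 1, y ∈ closure (Set.range f)

/-- `f`-`T`-information content of `x` at precision `δ`. -/
noncomputable def KprecF {A : Type} (T : FST A) (f : List A → ℝ) (δ : ℝ) (x : ℝ) : ℕ∞ :=
  sInf {k : ℕ∞ | ∃ w : List A, |f w - x| < δ ∧ Kfst T w = k}

/-- `f`-enumerator finite-state dimension of a point. -/
noncomputable def dimFSf {A : Type} [Fintype A] (f : List A → ℝ) (x : ℝ) : ℝ≥0∞ :=
  ⨅ T : FST A,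
    Filter.liminf (fun δ : ℝ =>
      (KprecF T f δ x : ℝ≥0∞) / ENNReal.ofReal (Real.logb (Fintype.card A) (1/δ)))
      (nhdsWithin 0 (Set.Ioi 0))

/-- `f`-enumerator finite-state dimension of a set. -/
noncomputable def dimFSfSet {A : Type} [Fintype A] (f : List A → ℝ) (E : Set ℝ) : ℝ≥0∞ :=
  ⨅ T : FST A, ⨆ x ∈ E,
    Filter.liminf (fun δ : ℝ =>
      (KprecF T f δ x : ℝ≥0∞) / ENNReal.ofReal (Real.logb (Fintype.card A) (1/δ)))
      (nhdsWithin 0 (Set.Ioi 0))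

open scoped Classical in
/-- Number of occurrences of `w` among the first `N` positions of `S`. -/
noncomputable def occCount {b : ℕ} (S : ℕ → Fin b) (w : List (Fin b)) (N : ℕ) : ℕ :=
  (Finset.range N).filter (fun i => ∀ j : Fin w.length, S (i + j.1) = w.get j) |>.card


/-!
The `n`-digit prefix of `S` lies within `b⁻ⁿ` of `x`, strictly because `S` does not end in
`b - 1`s. So at precision `δ = b⁻ⁿ` the `T`-information content of
`x` is at most that of `S ↾ n`, while `log_b (1/δ) = n`; and restricting the liminf over
`δ → 0⁺` to the subsequence `b⁻ⁿ` can only raise it.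
-/

namespace Real

theorem ofDigits_lt_one {b : ℕ} (hb : 1 < b) {a : ℕ → Fin b} (h : ∃ i, (a i : ℕ) ≠ b - 1) :
    ofDigits a < 1 := by
  obtain ⟨i, hi⟩ := h
  have hb' : ((b - 1 : ℕ) : ℝ) = b - 1 := by rw [Nat.cast_sub hb.le, Nat.cast_one]
  rw [← ofDigits_const_last_eq_one' hb]
  refine summable_ofDigitsTerm.tsum_lt_tsum (i := i) (fun n ↦ ?_) ?_ summable_ofDigitsTerm
  · exact ofDigitsTerm_le.trans_eq (by simp [ofDigitsTerm, hb'])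
  · have hlt : ((a i : ℕ) : ℝ) < ((b - 1 : ℕ) : ℝ) := by
      exact_mod_cast lt_of_le_of_ne (Nat.le_sub_one_of_lt (a i).isLt) hi
    simp only [ofDigitsTerm]
    gcongr

end Real

theorem realSeq_eq_ofDigits (b : ℕ) (S : ℕ → Fin b) : realSeq b S = Real.ofDigits S := by
  simp [realSeq, Real.ofDigits, Real.ofDigitsTerm, div_eq_mul_inv]

theorem realb_pre_eq_sum_ofDigitsTerm (b : ℕ) (S : ℕ → Fin b) (n : ℕ) :
    realb b (pre S n) = ∑ i ∈ Finset.range n, Real.ofDigitsTerm S i := by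
  rw [realb, pre, ← Fin.sum_univ_eq_sum_range]
  refine Finset.sum_equiv (finCongr List.length_ofFn) (by simp) fun i _ ↦ ?_
  simp [Real.ofDigitsTerm, finCongr, div_eq_mul_inv]

theorem abs_realb_pre_sub_realSeq_lt {b : ℕ} (hb : 1 < b) {S : ℕ → Fin b}
    (hS : ¬ endsBm1 b S) (n : ℕ) :
    |realb b (pre S n) - realSeq b S| < ((b : ℝ) ^ n)⁻¹ := by
  have htail : ∃ i, (S (i + n) : ℕ) ≠ b - 1 := by
    by_contra! h
    exact hS ⟨n, fun i hi ↦ by simpa [Nat.sub_add_cancel hi] using h (i - n)⟩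
  rw [realSeq_eq_ofDigits, Real.ofDigits_eq_sum_add_ofDigits S n, realb_pre_eq_sum_ofDigitsTerm,
    sub_add_cancel_left, abs_neg, abs_of_nonneg (mul_nonneg (by positivity) (Real.ofDigits_nonneg _))]
  exact mul_lt_of_lt_one_right (by positivity) (Real.ofDigits_lt_one hb htail)

theorem Kprec_le_Kfst {b : ℕ} (T : FST (Fin b)) {δ x : ℝ} {w : List (Fin b)}
    (hw : |realb b w - x| < δ) : Kprec b T δ x ≤ Kfst T w :=
  sInf_le ⟨w, hw, rfl⟩

theorem liminf_nhdsGT_zero_le_liminf_inv_pow {β : Type*} [CompleteLattice β] {b : ℝ} (hb : 1 < b)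
    (u : ℝ → β) :
    liminf u (nhdsWithin 0 (Ioi 0)) ≤ liminf (fun n : ℕ ↦ u ((b ^ n)⁻¹)) atTop :=
  (tendsto_inv_atTop_nhdsGT_zero.comp (tendsto_pow_atTop_atTop_of_one_lt hb)).liminf_le_liminf_comp

theorem dimFSb_le_dimFSseq_general (b : ℕ) (hb : 2 ≤ b) (x : ℝ)
    (S : ℕ → Fin b) (hS : realSeq b S = x) (hS' : ¬ endsBm1 b S) :
    dimFSb b x ≤ dimFSseq S := by
  have hb1 : (1 : ℝ) < b := by exact_mod_cast hb
  refine iInf_mono fun T ↦ (liminf_nhdsGT_zero_le_liminf_inv_pow hb1 _).trans <|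
    liminf_le_liminf <| Eventually.of_forall fun n ↦ ?_
  have hlog : Real.logb b (1 / ((b : ℝ) ^ n)⁻¹) = n := by
    simp [Real.logb_pow, Real.logb_self_eq_one hb1]
  have hK : Kprec b T ((b : ℝ) ^ n)⁻¹ x ≤ Kfst T (pre S n) :=
    Kprec_le_Kfst T (hS ▸ abs_realb_pre_sub_realSeq_lt hb hS' n)
  simp only [hlog, ENNReal.ofReal_natCast]
  gcongr

/-- dim_FS^b(x) ≤ dim_FS(seq_b(x)). -/
theorem dimFSb_le_dimFSseq (b : ℕ) (hb : 2 ≤ b) (x : ℝ) (hx : x ∈ Set.Ico (0:ℝ) 1)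
    (S : ℕ → Fin b) (hS : realSeq b S = x) (hS' : ¬ endsBm1 b S) :
    dimFSb b x ≤ dimFSseq S :=
  dimFSb_le_dimFSseq_general b hb x S hS hS'
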